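/- Let η ∈ (0, 1/4). Let a, x ∈ ℝ^{dx} and b, y ∈ ℝ^{dy} with ‖a‖ = ‖b‖ = 1 and x ≠ 0, y ≠ 0. If (aᵀx + bᵀy) / (√2 · √(‖x‖² + ‖y‖²)) ≥ 1 − η, then (1/2)·( |aᵀx| / ‖x‖ + |bᵀy| / ‖y‖ ) ≥ 1 − 4η. -/
import Mathlib


open Matrix

set_option maxHeartbeats 1000000

/-- Euclidean norm of a vector in `ℝ^d`. -/
noncomputable def vnorm {n : Type*} [Fintype n] (x : n → ℝ) : ℝ := Real.sqrt (x ⬝ᵥ x)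

lemma dot_self_nonneg {n : Type*} [Fintype n] (x : n → ℝ) : 0 ≤ x ⬝ᵥ x :=
  Finset.sum_nonneg fun i _ => mul_self_nonneg (x i)

lemma vnorm_sq {n : Type*} [Fintype n] (x : n → ℝ) : vnorm x ^ 2 = x ⬝ᵥ x :=
  Real.sq_sqrt (dot_self_nonneg x)

lemma vnorm_pos {n : Type*} [Fintype n] {x : n → ℝ} (hx : x ≠ 0) : 0 < vnorm x := by
  apply Real.sqrt_pos.2
  rcases lt_or_eq_of_le (dot_self_nonneg x) with h | h
  · exact h
  · exact absurd (dotProduct_self_eq_zero.1 h.symm) hx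

lemma cs_dot {n : Type*} [Fintype n] (f g : n → ℝ) :
    (f ⬝ᵥ g) ^ 2 ≤ (f ⬝ᵥ f) * (g ⬝ᵥ g) := by
  have := Finset.sum_mul_sq_le_sq_mul_sq Finset.univ f g
  simpa [dotProduct, pow_two, mul_comm] using this

/-- conversion from joint alignment to separate alignment, for unit
vectors `a, b` and nonzero vectors `x, y`. -/
theorem stmt_3 {dx dy : ℕ} (η : ℝ) (hη : η ∈ Set.Ioo (0 : ℝ) (1/4))
    (a x : Fin dx → ℝ) (b y : Fin dy → ℝ)
    (ha : vnorm a = 1) (hb : vnorm b = 1) (hx : x ≠ 0) (hy : y ≠ 0)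
    (h : (a ⬝ᵥ x + b ⬝ᵥ y) / (Real.sqrt 2 * Real.sqrt (vnorm x ^ 2 + vnorm y ^ 2)) ≥ 1 - η) :
    (1/2) * (|a ⬝ᵥ x| / vnorm x + |b ⬝ᵥ y| / vnorm y) ≥ 1 - 4 * η := by
  obtain ⟨hη0, hη4⟩ := hη
  set u := a ⬝ᵥ x
  set v := b ⬝ᵥ y
  set p := vnorm x with hp_def
  set q := vnorm y with hq_def
  have hp : 0 < p := vnorm_pos hx
  have hq : 0 < q := vnorm_pos hy
  have hpx : p ^ 2 = x ⬝ᵥ x := vnorm_sq x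
  have hqy : q ^ 2 = y ⬝ᵥ y := vnorm_sq y
  have hu2 : u ^ 2 ≤ p ^ 2 := by
    have := cs_dot a x
    have haa : a ⬝ᵥ a = 1 := by
      have := vnorm_sq a; rw [ha] at this; linarith
    rw [haa, one_mul, ← hpx] at this
    exact this
  have hv2 : v ^ 2 ≤ q ^ 2 := by
    have := cs_dot b y
    have hbb : b ⬝ᵥ b = 1 := by
      have := vnorm_sq b; rw [hb] at this; linarith
    rw [hbb, one_mul, ← hqy] at this
    exact this
  -- denominator
  set s := Real.sqrt (p ^ 2 + q ^ 2) with hs_def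
  have hs2 : s ^ 2 = p ^ 2 + q ^ 2 := Real.sq_sqrt (by positivity)
  have hs : 0 < s := Real.sqrt_pos.2 (by positivity)
  have hr2 : (Real.sqrt 2) ^ 2 = 2 := Real.sq_sqrt (by norm_num)
  have hr : 0 < Real.sqrt 2 := Real.sqrt_pos.2 (by norm_num)
  have h1η : 0 < 1 - η := by linarith
  have h1 : u + v ≥ (1 - η) * (Real.sqrt 2 * s) := by
    have h' := h
    rw [ge_iff_le, le_div_iff₀ (by positivity)] at h'
    linarith
  have huv_pos : 0 < u + v :=
    lt_of_lt_of_le (by positivity) h1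
  -- square the inequality
  have h2 : (u + v) ^ 2 ≥ 2 * (1 - η) ^ 2 * (p ^ 2 + q ^ 2) := by
    have hrs : (0:ℝ) ≤ (1 - η) * (Real.sqrt 2 * s) := by positivity
    have hms := mul_self_le_mul_self hrs h1
    have heq : ((1 - η) * (Real.sqrt 2 * s)) ^ 2 = 2 * (1 - η) ^ 2 * (p ^ 2 + q ^ 2) := by
      rw [mul_pow, mul_pow, hr2, hs2]; ring
    nlinarith [hms, heq]
  -- 2D Cauchy-Schwarz-style bound
  have h3 : (u + v) ^ 2 * (p ^ 2 * q ^ 2) ≤ (u ^ 2 * q ^ 2 + v ^ 2 * p ^ 2) * (p ^ 2 + q ^ 2) := by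
    nlinarith [sq_nonneg (u * q ^ 2 - v * p ^ 2), sq_nonneg p, sq_nonneg q]
  have h4 : u ^ 2 * q ^ 2 + v ^ 2 * p ^ 2 ≥ 2 * (1 - η) ^ 2 * (p ^ 2 * q ^ 2) := by
    have hpq : 0 < p ^ 2 + q ^ 2 := by positivity
    nlinarith [mul_le_mul_of_nonneg_right h2 (le_of_lt (mul_pos (pow_pos hp 2) (pow_pos hq 2)))]
  have key : ∀ w r t : ℝ, 0 < r → 0 < t → w ^ 2 ≤ r ^ 2 →
      (2 * (1 - η) ^ 2 - 1) * (t ^ 2 * r ^ 2) ≤ w ^ 2 * t ^ 2 → |w| / r ≥ 1 - 4 * η := by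
    intro w r t hrp htp hw hkey
    have h14 : 0 < 1 - 4 * η := by linarith
    have hwsq : w ^ 2 ≥ (1 - 4 * η) ^ 2 * r ^ 2 := by
      have ht2 : 0 < t ^ 2 := pow_pos htp 2
      have hc : (2 * (1 - η) ^ 2 - 1) * r ^ 2 ≤ w ^ 2 := by
        have step : (2 * (1 - η) ^ 2 - 1) * r ^ 2 * t ^ 2 ≤ w ^ 2 * t ^ 2 := by
          calc (2 * (1 - η) ^ 2 - 1) * r ^ 2 * t ^ 2
              = (2 * (1 - η) ^ 2 - 1) * (t ^ 2 * r ^ 2) := by ring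
            _ ≤ w ^ 2 * t ^ 2 := hkey
        exact le_of_mul_le_mul_right step ht2
      have hgap : (0:ℝ) ≤ (2 * η * (2 - 7 * η)) * r ^ 2 :=
        mul_nonneg (mul_nonneg (by linarith) (by linarith)) (sq_nonneg r)
      nlinarith [hc, hgap]
    have habs : |w| ≥ (1 - 4 * η) * r := by
      nlinarith [abs_nonneg w, sq_abs w, mul_pos h14 hrp]
    rw [ge_iff_le, le_div_iff₀ hrp]
    linarith
  have hU : |u| / p ≥ 1 - 4 * η := by
    apply key u p q hp hq hu2
    nlinarith [hv2, sq_nonneg p]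
  have hV : |v| / q ≥ 1 - 4 * η := by
    apply key v q p hq hp hv2
    nlinarith [hu2, sq_nonneg q]
  linarith
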